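/- arXiv:math/0312463 — 5 statements merged into one kernel-verified Lean document; each statement's English description precedes it below -/
import Mathlib

section
/- Suppose a nonnegative differentiable function φ : [0,∞) → ℝ satisfies φ'(t) ≤ -½ φ(t) whenever φ(t) ≥ α·ψ(t), where ψ : [0,∞) → ℝ is nonnegative with ψ(t) → 0 as t → ∞ and α > 0. Then φ(t) → 0 as t → ∞. -/
open Filter

theorem comparison_decay (φ ψ : ℝ → ℝ) (α : ℝ) (hα : 0 < α)
    (hφ : Differentiable ℝ φ)
    (hφ0 : ∀ t, 0 ≤ t → 0 ≤ φ t)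
    (hψ0 : ∀ t, 0 ≤ t → 0 ≤ ψ t)
    (hψc : Continuous ψ)
    (hψlim : Tendsto ψ atTop (nhds 0))
    (hcomp : ∀ t, 0 ≤ t → α * ψ t ≤ φ t → deriv φ t ≤ -(1 / 2) * φ t) :
    Tendsto φ atTop (nhds 0) := by
  have hφc : Continuous φ := hφ.continuous
  have hlim : Tendsto (fun t => α * ψ t) atTop (nhds 0) := by
    simpa using hψlim.const_mul α
  have key : ∀ e : ℝ, 0 < e → ∃ s : ℝ, 0 ≤ s ∧ ∀ t, s ≤ t → φ t ≤ e := by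
    intro e he0
    obtain ⟨T₀, hT₀⟩ := eventually_atTop.1 (hlim.eventually_lt_const he0)
    obtain ⟨T, hT0, hTsmall⟩ : ∃ T : ℝ, 0 ≤ T ∧ ∀ t, T ≤ t → α * ψ t < e :=
      ⟨max T₀ 0, le_max_right _ _, fun t ht => hT₀ t ((le_max_left _ _).trans ht)⟩
    -- Step A: φ drops below e at some point past T
    have hA : ∃ s, T ≤ s ∧ φ s ≤ e := by
      by_contra h
      push_neg at h
      have hgd : ∀ x, HasDerivAt (fun t => φ t + e / 2 * t) (deriv φ x + e / 2) x :=
        fun x =>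
          ((hφ x).hasDerivAt).add (by simpa using (hasDerivAt_id x).const_mul (e / 2))
      have hgc : Continuous (fun t => φ t + e / 2 * t) := by fun_prop
      have hganti : AntitoneOn (fun t => φ t + e / 2 * t) (Set.Ici T) := by
        apply antitoneOn_of_deriv_nonpos (convex_Ici T) hgc.continuousOn
          (fun x _ => ((hgd x).differentiableAt).differentiableWithinAt)
        intro x hx
        rw [interior_Ici] at hx
        have hxT : T ≤ x := le_of_lt hx
        have hx0 : (0:ℝ) ≤ x := hT0.trans hxT
        have h1 : α * ψ x ≤ φ x := le_of_lt ((hTsmall x hxT).trans (h x hxT))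
        have h2 : deriv φ x ≤ -(1 / 2) * φ x := hcomp x hx0 h1
        have h3 : e < φ x := h x hxT
        rw [(hgd x).deriv]
        nlinarith
      have hfT0 : 0 ≤ φ T := hφ0 T hT0
      have hpos : 0 ≤ 2 / e * (φ T + 1) := by positivity
      have htT : T ≤ T + 2 / e * (φ T + 1) := by linarith
      have hgle := hganti (Set.mem_Ici.2 le_rfl) (Set.mem_Ici.2 htT) htT
      simp only at hgle
      have hφt0 : 0 ≤ φ (T + 2 / e * (φ T + 1)) := hφ0 _ (hT0.trans htT)
      have hcomp2 : e / 2 * (2 / e * (φ T + 1)) = φ T + 1 := by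
        field_simp
      nlinarith
    obtain ⟨s, hTs, hse⟩ := hA
    refine ⟨s, hT0.trans hTs, ?_⟩
    -- Step B: φ stays below e after s
    intro t hst
    by_contra hgt
    push_neg at hgt
    have hslt : s < t := by
      rcases hst.lt_or_eq with h | h
      · exact h
      · subst h; linarith
    have hSne : (Set.Icc s t ∩ {r | φ r ≤ e}).Nonempty :=
      ⟨s, ⟨le_rfl, le_of_lt hslt⟩, hse⟩
    have hSbdd : BddAbove (Set.Icc s t ∩ {r | φ r ≤ e}) := ⟨t, fun r hr => hr.1.2⟩
    have hSclosed : IsClosed (Set.Icc s t ∩ {r | φ r ≤ e}) :=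
      isClosed_Icc.inter (isClosed_le hφc continuous_const)
    obtain ⟨u, hu⟩ : ∃ u, u = sSup (Set.Icc s t ∩ {r | φ r ≤ e}) := ⟨_, rfl⟩
    have huS : u ∈ Set.Icc s t ∩ {r | φ r ≤ e} := hu ▸ hSclosed.csSup_mem hSne hSbdd
    obtain ⟨⟨hsu, hut⟩, hue⟩ := huS
    have hue' : φ u ≤ e := hue
    have hult : u < t := lt_of_le_of_ne hut (by rintro rfl; exact absurd hue (not_le.2 hgt))
    have hIoo : ∀ r, r ∈ Set.Ioo u t → e < φ r := by
      intro r hr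
      by_contra hre
      push_neg at hre
      have hrS : r ∈ Set.Icc s t ∩ {r | φ r ≤ e} :=
        ⟨⟨hsu.trans (le_of_lt hr.1), le_of_lt hr.2⟩, hre⟩
      exact absurd (hu ▸ le_csSup hSbdd hrS) (not_le.2 hr.1)
    have hanti : StrictAntiOn φ (Set.Icc u t) := by
      apply strictAntiOn_of_deriv_neg (convex_Icc u t) hφc.continuousOn
      intro x hx
      rw [interior_Icc] at hx
      have hxe : e < φ x := hIoo x hx
      have hxT : T ≤ x := hTs.trans (hsu.trans (le_of_lt hx.1))
      have hx0 : (0:ℝ) ≤ x := hT0.trans hxT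
      have h1 : α * ψ x ≤ φ x := le_of_lt ((hTsmall x hxT).trans hxe)
      have h2 : deriv φ x ≤ -(1 / 2) * φ x := hcomp x hx0 h1
      nlinarith
    have := hanti (Set.left_mem_Icc.2 (le_of_lt hult))
      (Set.right_mem_Icc.2 (le_of_lt hult)) hult
    linarith
  rw [Metric.tendsto_atTop]
  intro ε hε
  obtain ⟨s, hs0, hsb⟩ := key (ε / 2) (by positivity)
  refine ⟨s, fun n hn => ?_⟩
  rw [Real.dist_eq, sub_zero, abs_of_nonneg (hφ0 n (hs0.trans hn))]
  have := hsb n hn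
  linarith
end

section
/- If a positive differentiable function M : [0,∞) → (0,∞) satisfies M'(t) ≤ 4M(t)² + 2Λ·M(t) for a constant Λ > 0, then log(M(t)/((2/Λ)M(t)+1)) − log(M(0)/((2/Λ)M(0)+1)) ≤ 2Λt for all t ≥ 0, and consequently M(t) ≤ 2M(0) for all t ≤ (1/(2Λ))·log(1 + Λ/(4M(0)+Λ+1)). -/
/-! With `a = 2 / Λ`, the right-hand side of the differential inequality factors as
`4 M² + 2 Λ M = 2 Λ · M (a M + 1)`, and `x ↦ log (x / (a x + 1))` has derivative
`1 / (x (a x + 1))`. Hence `log (M / (a M + 1))` grows at rate at most `2 Λ`. Since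
`x ↦ x / (a x + 1)` is increasing, `M t ≤ 2 M 0` as long as this ratio at `M t` stays below its
value at `2 M 0`, which the growth bound guarantees for the stated times. -/

open Real Set

theorem hasDerivAt_log_div_mul_add_one {a x : ℝ} (hx : x ≠ 0) (hax : a * x + 1 ≠ 0) :
    HasDerivAt (fun y => log (y / (a * y + 1))) (1 / (x * (a * x + 1))) x := by
  have hquot : HasDerivAt (fun y => y / (a * y + 1))
      ((1 * (a * x + 1) - x * (a * 1)) / (a * x + 1) ^ 2) x :=
    (hasDerivAt_id x).div (((hasDerivAt_id x).const_mul a).add_const 1) hax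
  convert hquot.log (div_ne_zero hx hax) using 1
  field_simp
  ring

theorem log_div_mul_add_one_sub_le_of_deriv_le {f : ℝ → ℝ} {a C s t : ℝ} (hst : s ≤ t)
    (hf : Differentiable ℝ f) (ha : 0 ≤ a) (hpos : ∀ u ∈ Icc s t, 0 < f u)
    (hbound : ∀ u ∈ Ioo s t, deriv f u ≤ C * (f u * (a * f u + 1))) :
    log (f t / (a * f t + 1)) - log (f s / (a * f s + 1)) ≤ C * (t - s) := by
  have hderiv : ∀ u ∈ Icc s t, HasDerivAt (fun v => log (f v / (a * f v + 1)))
      (deriv f u / (f u * (a * f u + 1))) u := fun u hu => by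
    have hfu := hpos u hu
    have hden : 0 < a * f u + 1 := by positivity
    have h := (hasDerivAt_log_div_mul_add_one hfu.ne' hden.ne').comp u (hf u).hasDerivAt
    rwa [one_div_mul_eq_div] at h
  refine (convex_Icc s t).image_sub_le_mul_sub_of_deriv_le
    (fun u hu => (hderiv u hu).continuousAt.continuousWithinAt) ?_ ?_ s ⟨le_rfl, hst⟩ t
    ⟨hst, le_rfl⟩ hst
  all_goals rw [interior_Icc]
  · exact fun u hu => (hderiv u (Ioo_subset_Icc_self hu)).differentiableAt.differentiableWithinAt
  · intro u hu
    have hfu := hpos u (Ioo_subset_Icc_self hu)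
    rw [(hderiv u (Ioo_subset_Icc_self hu)).deriv, div_le_iff₀ (by positivity)]
    exact hbound u hu

theorem div_mul_add_one_le_div_mul_add_one_iff {a x y : ℝ} (hx : 0 < a * x + 1)
    (hy : 0 < a * y + 1) : x / (a * x + 1) ≤ y / (a * y + 1) ↔ x ≤ y := by
  rw [div_le_div_iff₀ hx hy]
  constructor <;> intro h <;> linarith

theorem div_mul_add_one_mul_one_add_le_double {Λ m : ℝ} (hΛ : 0 < Λ) (hm : 0 ≤ m) :
    m / (2 / Λ * m + 1) * (1 + Λ / (4 * m + Λ + 1)) ≤ 2 * m / (2 / Λ * (2 * m) + 1) := by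
  field_simp
  nlinarith [mul_nonneg hm hΛ.le]

theorem doubling_time_estimate (M : ℝ → ℝ) (Λ : ℝ) (hΛ : 0 < Λ)
    (hM : Differentiable ℝ M) (hpos : ∀ t, 0 ≤ t → 0 < M t)
    (hode : ∀ t, 0 ≤ t → deriv M t ≤ 4 * (M t) ^ 2 + 2 * Λ * M t) :
    (∀ t, 0 ≤ t →
      Real.log (M t / ((2 / Λ) * M t + 1)) - Real.log (M 0 / ((2 / Λ) * M 0 + 1))
        ≤ 2 * Λ * t) ∧
    (∀ t, 0 ≤ t → t ≤ (1 / (2 * Λ)) * Real.log (1 + Λ / (4 * M 0 + Λ + 1)) →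
      M t ≤ 2 * M 0) := by
  have hM0 := hpos 0 le_rfl
  have growth : ∀ t, 0 ≤ t → log (M t / ((2 / Λ) * M t + 1)) -
      log (M 0 / ((2 / Λ) * M 0 + 1)) ≤ 2 * Λ * t := fun t ht => by
    simpa using log_div_mul_add_one_sub_le_of_deriv_le ht hM (by positivity)
      (fun u hu => hpos u hu.1) fun u hu => (hode u hu.1.le).trans_eq (by field_simp; ring)
  refine ⟨growth, fun t ht hT => ?_⟩
  have hMt := hpos t ht
  rw [one_div_mul_eq_div, le_div_iff₀ (by positivity)] at hT
  have hlog : log (M t / ((2 / Λ) * M t + 1)) ≤ log (2 * M 0 / ((2 / Λ) * (2 * M 0) + 1)) :=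
    calc log (M t / ((2 / Λ) * M t + 1))
        ≤ log (M 0 / ((2 / Λ) * M 0 + 1)) + log (1 + Λ / (4 * M 0 + Λ + 1)) := by
          linarith [growth t ht]
      _ = log (M 0 / ((2 / Λ) * M 0 + 1) * (1 + Λ / (4 * M 0 + Λ + 1))) :=
          (log_mul (by positivity) (by positivity)).symm
      _ ≤ log (2 * M 0 / ((2 / Λ) * (2 * M 0) + 1)) :=
          log_le_log (by positivity) (div_mul_add_one_mul_one_add_le_double hΛ hM0.le)
  rw [log_le_log_iff (by positivity) (by positivity),
    div_mul_add_one_le_div_mul_add_one_iff (by positivity) (by positivity)] at hlog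
  exact hlog
end

section
/- Consider the planar ODE system u' = 2u² − 2u − 2uv, v' = 4uv with initial conditions u(0) = 1, v(0) = v₀ > 0. Then along any solution with v(t) > 0, the quantity u(t) − 1 − (v(t)·v₀)^{1/2} + v(t) is identically zero, i.e., u(t) = 1 + (v(t)v₀)^{1/2} − v(t). -/
/-!
Put `w = u - 1 + v`. The system gives `w' = 2u·w` and `v' = 4u·v = 2·(2u)·v`, so `w² / v` has
zero derivative and stays equal to its initial value `v₀`: thus `w² = v·v₀`. Since `v > 0`, `w`
never vanishes, and as `w(0) = v₀ > 0` it stays positive, whence `w = √(v·v₀)`.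
-/

open Set

theorem IsPreconnected.pos_of_ne_zero {X α : Type*} [TopologicalSpace X] [LinearOrder α]
    [TopologicalSpace α] [OrderClosedTopology α] [Zero α] {s : Set X} (hs : IsPreconnected s)
    {f : X → α} (hf : ContinuousOn f s) (hne : ∀ x ∈ s, f x ≠ 0) {a b : X} (ha : a ∈ s)
    (hb : b ∈ s) (hpos : 0 < f a) : 0 < f b := by
  by_contra! hfb
  obtain ⟨c, hc, hfc⟩ := hs.intermediate_value hb ha hf ⟨hfb, hpos.le⟩
  exact hne c hc hfc

theorem Convex.is_const_of_hasDerivAt_zero {s : Set ℝ} (hs : Convex ℝ s) {f : ℝ → ℝ}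
    (hf : ∀ x ∈ s, HasDerivAt f 0 x) {x y : ℝ} (hx : x ∈ s) (hy : y ∈ s) : f x = f y := by
  have h := hs.norm_image_sub_le_of_norm_hasDerivWithin_le
    (fun z hz => (hf z hz).hasDerivWithinAt) (fun _ _ => (norm_zero (E := ℝ)).le) hy hx
  rwa [zero_mul, norm_le_zero_iff, sub_eq_zero] at h

theorem hasDerivAt_sq_div_zero {𝕜 : Type*} [NontriviallyNormedField 𝕜] {w v : 𝕜 → 𝕜}
    {a x : 𝕜} (hw : HasDerivAt w (a * w x) x) (hv : HasDerivAt v (2 * a * v x) x)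
    (hvx : v x ≠ 0) : HasDerivAt (fun s => w s ^ 2 / v s) 0 x := by
  refine ((hw.fun_pow 2).fun_div hv hvx).congr_deriv ?_
  rw [div_eq_zero_iff]
  left
  ring

theorem first_integral_H3_general (T v₀ : ℝ) (u v : ℝ → ℝ)
    (hu0 : u 0 = 1) (hv0 : v 0 = v₀)
    (hvpos : ∀ t ∈ Set.Ico (0:ℝ) T, 0 < v t)
    (hu : ∀ t ∈ Set.Ico (0:ℝ) T,
      HasDerivAt u (2 * (u t) ^ 2 - 2 * u t - 2 * u t * v t) t)
    (hv : ∀ t ∈ Set.Ico (0:ℝ) T, HasDerivAt v (4 * u t * v t) t) :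
    ∀ t ∈ Set.Ico (0:ℝ) T, u t = 1 + Real.sqrt (v t * v₀) - v t := by
  intro t ht
  have h0 : (0 : ℝ) ∈ Ico 0 T := ⟨le_rfl, ht.1.trans_lt ht.2⟩
  have hv₀ : 0 < v₀ := hv0 ▸ hvpos 0 h0
  set w : ℝ → ℝ := fun s => u s - 1 + v s
  have hw : ∀ s ∈ Ico 0 T, HasDerivAt w (2 * u s * w s) s := fun s hs =>
    (((hu s hs).sub_const 1).add (hv s hs)).congr_deriv (by ring)
  have hw_sq : ∀ s ∈ Ico 0 T, w s ^ 2 = v s * v₀ := by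
    intro s hs
    have h := (convex_Ico 0 T).is_const_of_hasDerivAt_zero (fun r hr =>
      hasDerivAt_sq_div_zero (hw r hr) ((hv r hr).congr_deriv (by ring)) (hvpos r hr).ne') hs h0
    simp only [w, hu0, hv0, sub_self, zero_add] at h
    rw [div_eq_iff (hvpos s hs).ne'] at h
    rw [h]
    field_simp
  have hw_pos : 0 < w t := by
    refine isPreconnected_Ico.pos_of_ne_zero (fun s hs => (hw s hs).continuousAt.continuousWithinAt)
      (fun s hs hws => ?_) h0 ht (by simpa [w, hu0, hv0] using hv₀)
    have h := hw_sq s hs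
    rw [hws, zero_pow two_ne_zero] at h
    exact (mul_pos (hvpos s hs) hv₀).ne' h.symm
  rw [← hw_sq t ht, Real.sqrt_sq hw_pos.le]
  ring

theorem first_integral_H3 (T v₀ : ℝ) (u v : ℝ → ℝ) (hv₀ : 0 < v₀)
    (hu0 : u 0 = 1) (hv0 : v 0 = v₀)
    (hvpos : ∀ t ∈ Set.Ico (0:ℝ) T, 0 < v t)
    (hu : ∀ t ∈ Set.Ico (0:ℝ) T,
      HasDerivAt u (2 * (u t) ^ 2 - 2 * u t - 2 * u t * v t) t)
    (hv : ∀ t ∈ Set.Ico (0:ℝ) T, HasDerivAt v (4 * u t * v t) t) :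
    ∀ t ∈ Set.Ico (0:ℝ) T, u t = 1 + Real.sqrt (v t * v₀) - v t :=
  first_integral_H3_general T v₀ u v hu0 hv0 hvpos hu hv
end

section
/- For the system k' = k³ − τ²k − k, τ' = 2τk² (curve shortening in H³ with spatially constant curvature and torsion), if k(0)² = 1 and τ(0) > 0, then k(t)² → 0 and τ(t)² → the positive root of 1 + τ(0)·x − x² = 0 squared, as t → ∞; in particular k(t) → 0. -/
/-!
`I = τ² + k² - 1 - τ(0) τ` satisfies the linear equation `I' = 2k² I` and `I(0) = 0`, so `I ≡ 0`;
likewise `τ' = 2k² τ` keeps `τ` positive, hence increasing. On `I = 0` we get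
`k² = 1 - τ (τ - τ(0))`, so `(k²)' = 2k² (k² - τ² - 1) ≤ -2τ(0)² k²` and `k²` decays exponentially.
Finally `τ² - τ(0) τ - 1 = -k²` pins `τ` to the positive root of `x² - τ(0) x - 1` up to `O(k²)`.
-/

open Filter Set Real

theorem eqOn_zero_of_hasDerivAt_mul_self {f a : ℝ → ℝ} {b c t₀ : ℝ}
    (ha : ContinuousOn a (Icc b c)) (hf : ∀ t ∈ Icc b c, HasDerivAt f (a t * f t) t)
    (ht₀ : t₀ ∈ Icc b c) (hf₀ : f t₀ = 0) : EqOn f 0 (Icc b c) := by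
  obtain ⟨K, hK⟩ := isCompact_Icc.exists_bound_of_continuousOn ha
  have hv : ∀ t ∈ Icc b c, LipschitzOnWith K.toNNReal (a t * ·) univ := fun t ht =>
    ((lipschitzWith_smul (a t)).weaken
      (norm_toNNReal.symm.trans_le (Real.toNNReal_le_toNNReal (hK t ht)))).lipschitzOnWith
  have hfc : ContinuousOn f (Icc b c) := fun t ht => (hf t ht).continuousAt.continuousWithinAt
  have h0 : ∀ t, HasDerivAt (0 : ℝ → ℝ) (a t * 0) t := fun t => by simp
  rw [← Icc_union_Icc_eq_Icc ht₀.1 ht₀.2]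
  refine EqOn.union ?_ ?_
  · have hsub : Ioc b t₀ ⊆ Icc b c := fun t ht => ⟨ht.1.le, ht.2.trans ht₀.2⟩
    exact ODE_solution_unique_of_mem_Icc_left (fun t ht => hv t (hsub ht))
      (hfc.mono (Icc_subset_Icc_right ht₀.2))
      (fun t ht => (hf t (hsub ht)).hasDerivWithinAt) (fun _ _ => mem_univ _)
      continuousOn_const (fun t _ => (h0 t).hasDerivWithinAt) (fun _ _ => mem_univ _) hf₀
  · have hsub : Ico t₀ c ⊆ Icc b c := fun t ht => ⟨ht₀.1.trans ht.1, ht.2.le⟩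
    exact ODE_solution_unique_of_mem_Icc_right (fun t ht => hv t (hsub ht))
      (hfc.mono (Icc_subset_Icc_left ht₀.1))
      (fun t ht => (hf t (hsub ht)).hasDerivWithinAt) (fun _ _ => mem_univ _)
      continuousOn_const (fun t _ => (h0 t).hasDerivWithinAt) (fun _ _ => mem_univ _) hf₀

theorem pos_of_hasDerivAt_mul_self {f a : ℝ → ℝ} {b c : ℝ}
    (ha : ContinuousOn a (Icc b c)) (hf : ∀ t ∈ Icc b c, HasDerivAt f (a t * f t) t)
    (hb : 0 < f b) : ∀ t ∈ Icc b c, 0 < f t := by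
  intro t ht
  by_contra! hft
  have hsub : Icc b t ⊆ Icc b c := Icc_subset_Icc_right ht.2
  obtain ⟨t₀, ht₀, hf₀⟩ : ∃ t₀ ∈ Icc b t, f t₀ = 0 :=
    intermediate_value_Icc' ht.1
      (fun s hs => (hf s (hsub hs)).continuousAt.continuousWithinAt) ⟨hft, hb.le⟩
  have := eqOn_zero_of_hasDerivAt_mul_self (ha.mono hsub)
    (fun s hs => hf s (hsub hs)) ht₀ hf₀ (left_mem_Icc.2 ht.1)
  simp [this] at hb

theorem le_mul_exp_of_hasDerivAt_le_mul {f f' : ℝ → ℝ} {K b c : ℝ}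
    (hf : ∀ t ∈ Icc b c, HasDerivAt f (f' t) t) (bound : ∀ t ∈ Icc b c, f' t ≤ K * f t) :
    ∀ t ∈ Icc b c, f t ≤ f b * exp (K * (t - b)) := by
  intro t ht
  rw [← gronwallBound_ε0]
  refine le_gronwallBound_of_liminf_deriv_right_le
    (fun s hs => (hf s hs).continuousAt.continuousWithinAt)
    (fun s hs _ hr => (hf s (Ico_subset_Icc_self hs)).hasDerivWithinAt.liminf_right_slope_le hr)
    le_rfl (fun s hs => by simpa using bound s (Ico_subset_Icc_self hs)) t ht

/-- `(p ± √(p ^ 2 + 4)) / 2` are the roots of `x ^ 2 - p x - 1`. -/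
theorem abs_sub_root_mul_root_le {p x : ℝ} (hp : 0 ≤ p) (hx : p ≤ x) :
    |x - (p + √(p ^ 2 + 4)) / 2| * ((p + √(p ^ 2 + 4)) / 2) ≤ |x ^ 2 - p * x - 1| := by
  set r := (p + √(p ^ 2 + 4)) / 2
  have hs : √(p ^ 2 + 4) ^ 2 = p ^ 2 + 4 := sq_sqrt (by positivity)
  have hfactor : x ^ 2 - p * x - 1 = (x - r) * (x - (p - √(p ^ 2 + 4)) / 2) := by
    simp only [r]; linear_combination hs / 4
  have hr : r ≤ x - (p - √(p ^ 2 + 4)) / 2 := by simp only [r]; linarith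
  rw [hfactor, abs_mul, abs_of_nonneg ((by positivity : 0 ≤ r).trans hr)]
  exact mul_le_mul_of_nonneg_left hr (abs_nonneg _)

/-- Curvature `k` and torsion `τ` of a curve in `ℍ³` with spatially constant curvature and torsion
evolving by curve shortening flow. -/
structure IsConstCurvatureTorsionFlow (k τ : ℝ → ℝ) : Prop where
  hasDerivAt_curvature : ∀ t, 0 ≤ t → HasDerivAt k (k t ^ 3 - τ t ^ 2 * k t - k t) t
  hasDerivAt_torsion : ∀ t, 0 ≤ t → HasDerivAt τ (2 * τ t * k t ^ 2) t

namespace IsConstCurvatureTorsionFlow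

variable {k τ : ℝ → ℝ} (h : IsConstCurvatureTorsionFlow k τ)
include h

theorem continuousOn_two_mul_curvature_sq (c : ℝ) :
    ContinuousOn (fun t => 2 * k t ^ 2) (Icc 0 c) := fun t ht =>
  ((h.hasDerivAt_curvature t ht.1).continuousAt.pow 2).const_mul 2 |>.continuousWithinAt

theorem torsion_pos (hτ0 : 0 < τ 0) {t : ℝ} (ht : 0 ≤ t) : 0 < τ t :=
  pos_of_hasDerivAt_mul_self (h.continuousOn_two_mul_curvature_sq t)
    (fun s hs => (h.hasDerivAt_torsion s hs.1).congr_deriv (by ring)) hτ0 t ⟨ht, le_rfl⟩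

theorem torsion_monotoneOn (hτ0 : 0 < τ 0) : MonotoneOn τ (Ici 0) := by
  refine monotoneOn_of_hasDerivWithinAt_nonneg (convex_Ici 0)
    (fun t ht => (h.hasDerivAt_torsion t ht).continuousAt.continuousWithinAt)
    (fun t ht => (h.hasDerivAt_torsion t (interior_subset ht)).hasDerivWithinAt)
    (fun t ht => ?_)
  have := h.torsion_pos hτ0 (interior_subset ht : (0 : ℝ) ≤ t)
  positivity

/-- `τ ^ 2 + k ^ 2 - 1 - τ 0 * τ` solves `I' = 2 k ^ 2 I` and vanishes at `0`. -/
theorem curvature_sq_eq (hk0 : k 0 ^ 2 = 1) {t : ℝ} (ht : 0 ≤ t) :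
    k t ^ 2 = 1 - τ t * (τ t - τ 0) := by
  have hI : ∀ s ∈ Icc 0 t, HasDerivAt (fun s => τ s ^ 2 + k s ^ 2 - 1 - τ 0 * τ s)
      (2 * k s ^ 2 * (τ s ^ 2 + k s ^ 2 - 1 - τ 0 * τ s)) s := fun s hs => by
    have hks := h.hasDerivAt_curvature s hs.1
    have hτs := h.hasDerivAt_torsion s hs.1
    exact ((((hτs.pow 2).add (hks.pow 2)).sub_const 1).sub (hτs.const_mul (τ 0))).congr_deriv
      (by ring)
  have := eqOn_zero_of_hasDerivAt_mul_self (h.continuousOn_two_mul_curvature_sq t) hI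
    (left_mem_Icc.2 ht) (by simp [hk0]; ring) (right_mem_Icc.2 ht)
  simp only [Pi.zero_apply] at this
  linarith

theorem curvature_sq_le_exp (hk0 : k 0 ^ 2 = 1) (hτ0 : 0 < τ 0) {t : ℝ} (ht : 0 ≤ t) :
    k t ^ 2 ≤ exp (-(2 * τ 0 ^ 2) * t) := by
  have hbound : ∀ s ∈ Icc 0 t,
      2 * k s * (k s ^ 3 - τ s ^ 2 * k s - k s) ≤ -(2 * τ 0 ^ 2) * k s ^ 2 := fun s hs => by
    have hks := h.curvature_sq_eq hk0 hs.1
    have hτs : τ 0 ≤ τ s := h.torsion_monotoneOn hτ0 self_mem_Ici hs.1 hs.1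
    have : 0 ≤ k s ^ 2 * ((2 * τ s + τ 0) * (τ s - τ 0)) := by
      have := h.torsion_pos hτ0 hs.1
      apply mul_nonneg <;> [positivity; exact mul_nonneg (by linarith) (by linarith)]
    nlinarith
  have := le_mul_exp_of_hasDerivAt_le_mul (f := fun s => k s ^ 2)
    (fun s hs => ((h.hasDerivAt_curvature s hs.1).pow 2).congr_deriv (by ring)) hbound t
    ⟨ht, le_rfl⟩
  simpa [hk0] using this

theorem abs_torsion_sub_mul_le (hk0 : k 0 ^ 2 = 1) (hτ0 : 0 < τ 0) {t : ℝ} (ht : 0 ≤ t) :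
    |τ t - (τ 0 + √(τ 0 ^ 2 + 4)) / 2| * ((τ 0 + √(τ 0 ^ 2 + 4)) / 2) ≤ k t ^ 2 := by
  have := abs_sub_root_mul_root_le hτ0.le (h.torsion_monotoneOn hτ0 self_mem_Ici ht ht)
  rwa [show τ t ^ 2 - τ 0 * τ t - 1 = -k t ^ 2 by rw [h.curvature_sq_eq hk0 ht]; ring,
    abs_neg, abs_of_nonneg (sq_nonneg (k t))] at this

theorem tendsto_curvature_sq (hk0 : k 0 ^ 2 = 1) (hτ0 : 0 < τ 0) :
    Tendsto (fun t => k t ^ 2) atTop (nhds 0) := by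
  have hexp : Tendsto (fun t => exp (-(2 * τ 0 ^ 2) * t)) atTop (nhds 0) :=
    tendsto_exp_atBot.comp <| tendsto_id.const_mul_atTop_of_neg (by nlinarith)
  exact squeeze_zero' (.of_forall fun t => sq_nonneg (k t))
    ((eventually_ge_atTop 0).mono fun t ht => h.curvature_sq_le_exp hk0 hτ0 ht) hexp

theorem tendsto_torsion (hk0 : k 0 ^ 2 = 1) (hτ0 : 0 < τ 0) :
    Tendsto τ atTop (nhds ((τ 0 + √(τ 0 ^ 2 + 4)) / 2)) := by
  set L := (τ 0 + √(τ 0 ^ 2 + 4)) / 2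
  have hL : 0 < L := by positivity
  rw [tendsto_iff_norm_sub_tendsto_zero]
  have hbound := (h.tendsto_curvature_sq hk0 hτ0).div_const L
  rw [zero_div] at hbound
  refine squeeze_zero' (.of_forall fun t => norm_nonneg _)
    ((eventually_ge_atTop 0).mono fun t ht => ?_) hbound
  rw [Real.norm_eq_abs, le_div_iff₀ hL]
  exact h.abs_torsion_sub_mul_le hk0 hτ0 ht

end IsConstCurvatureTorsionFlow

theorem H3_constant_curvature_torsion (k τ : ℝ → ℝ)
    (hk : ∀ t, 0 ≤ t → HasDerivAt k ((k t) ^ 3 - (τ t) ^ 2 * k t - k t) t)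
    (hτ : ∀ t, 0 ≤ t → HasDerivAt τ (2 * τ t * (k t) ^ 2) t)
    (hk0 : (k 0) ^ 2 = 1) (hτ0 : 0 < τ 0) :
    Tendsto (fun t => (k t) ^ 2) atTop (nhds 0) ∧
    Tendsto (fun t => (τ t) ^ 2) atTop
      (nhds (((τ 0 + Real.sqrt ((τ 0) ^ 2 + 4)) / 2) ^ 2)) ∧
    Tendsto k atTop (nhds 0) := by
  have h : IsConstCurvatureTorsionFlow k τ := ⟨hk, hτ⟩
  have hk2 := h.tendsto_curvature_sq hk0 hτ0
  refine ⟨hk2, (h.tendsto_torsion hk0 hτ0).pow 2, ?_⟩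
  have habs := (continuous_sqrt.tendsto 0).comp hk2
  simp only [Function.comp_def, sqrt_sq_eq_abs, sqrt_zero] at habs
  exact tendsto_zero_iff_abs_tendsto_zero k |>.2 habs
end

section
/- Let u : S¹ × [0,T) → ℝ be a smooth solution of ∂u/∂t = ∂²u/∂s² + k²u where k : S¹ × [0,T) → ℝ is continuous. If u(·,0) > 0 everywhere, then u(·,t) > 0 for all t ∈ [0,T); moreover μ(t) = min_{S¹} u(·,t) is nondecreasing in t. -/
open Real Filter Set
open scoped ContDiff Topology

/-- If `c ≤ φ` on `[a,t)` and `φ` is continuous, then `c ≤ φ t`. -/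
lemma ramp_le_of_Ico (φ : ℝ → ℝ) (hφ : Continuous φ) {a t c : ℝ} (hat : a < t)
    (H : ∀ τ ∈ Set.Ico a t, c ≤ φ τ) : c ≤ φ t := by
  have h1 : Filter.Tendsto φ (𝓝[<] t) (𝓝 (φ t)) :=
    (hφ.tendsto t).mono_left nhdsWithin_le_nhds
  refine ge_of_tendsto h1 ?_
  filter_upwards [Ioo_mem_nhdsLT hat] with τ hτ
  exact H τ ⟨hτ.1.le, hτ.2⟩

/-- At a minimum at the right endpoint of `[a, t₁]`, the derivative is `≤ 0`. -/
lemma ramp_deriv_nonpos (φ : ℝ → ℝ) {a t₁ : ℝ} (hd : DifferentiableAt ℝ φ t₁)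
    (hat : a < t₁) (hm : ∀ t ∈ Set.Icc a t₁, φ t₁ ≤ φ t) : deriv φ t₁ ≤ 0 := by
  by_contra hpos
  push_neg at hpos
  have hs := hd.hasDerivAt
  rw [hasDerivAt_iff_tendsto_slope] at hs
  have hs' : Tendsto (slope φ t₁) (𝓝[<] t₁) (𝓝 (deriv φ t₁)) :=
    hs.mono_left (nhdsWithin_mono _ fun x hx => ne_of_lt hx)
  have hev : ∀ᶠ τ in 𝓝[<] t₁, 0 < slope φ t₁ τ := hs'.eventually (eventually_gt_nhds hpos)
  have hev2 : ∀ᶠ τ in 𝓝[<] t₁, τ ∈ Set.Ioo a t₁ :=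
    Ioo_mem_nhdsLT hat
  obtain ⟨τ, h1, h2⟩ := (hev.and hev2).exists
  rw [slope_def_field] at h1
  have hnum : φ t₁ ≤ φ τ := hm τ ⟨h2.1.le, h2.2.le⟩
  have hden : τ - t₁ < 0 := sub_neg.mpr h2.2
  rcases div_pos_iff.mp h1 with ⟨h3, h4⟩ | ⟨h3, h4⟩
  · linarith
  · linarith

/-- Second derivative test at a global minimum of a smooth function. -/
lemma ramp_second_deriv_nonneg (g : ℝ → ℝ) (hg : ContDiff ℝ ∞ g) (s₁ : ℝ)
    (hm : ∀ s, g s₁ ≤ g s) : 0 ≤ deriv (deriv g) s₁ := by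
  by_contra hneg
  push_neg at hneg
  have hgd : Differentiable ℝ g := hg.differentiable (by simp)
  have hg1 : ContDiff ℝ ∞ (deriv g) := (contDiff_infty_iff_deriv.mp hg).2
  have hg1d : Differentiable ℝ (deriv g) := hg1.differentiable (by simp)
  have hloc : IsLocalMin g s₁ := Filter.Eventually.of_forall hm
  have h0 : deriv g s₁ = 0 := hloc.deriv_eq_zero
  have hh := (hg1d s₁).hasDerivAt
  rw [hasDerivAt_iff_tendsto_slope] at hh
  have hh' : Tendsto (slope (deriv g) s₁) (𝓝[>] s₁) (𝓝 (deriv (deriv g) s₁)) :=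
    hh.mono_left (nhdsWithin_mono _ fun x hx => ne_of_gt hx)
  have hev : ∀ᶠ τ in 𝓝[>] s₁, slope (deriv g) s₁ τ < 0 :=
    hh'.eventually (eventually_lt_nhds hneg)
  obtain ⟨b, hb, hsub⟩ := mem_nhdsGT_iff_exists_Ioo_subset.mp hev
  have hsb : s₁ < b := hb
  have hneg' : ∀ τ ∈ Set.Ioo s₁ b, deriv g τ < 0 := by
    intro τ hτ
    have h3 := hsub hτ
    rw [Set.mem_setOf_eq, slope_def_field, h0, sub_zero] at h3
    rcases div_neg_iff.mp h3 with ⟨h4, h5⟩ | ⟨h4, h5⟩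
    · linarith [hτ.1]
    · exact h4
  have hanti : StrictAntiOn g (Set.Icc s₁ b) := by
    refine strictAntiOn_of_deriv_neg (convex_Icc _ _) hgd.continuous.continuousOn ?_
    intro x hx
    rw [interior_Icc] at hx
    exact hneg' x hx
  have hmid : g ((s₁ + b) / 2) < g s₁ := by
    have h1 : s₁ ∈ Set.Icc s₁ b := ⟨le_refl _, hsb.le⟩
    have h2 : (s₁ + b) / 2 ∈ Set.Icc s₁ b := ⟨by linarith, by linarith⟩
    exact hanti h1 h2 (by linarith)
  exact absurd (hm _) (not_le.mpr hmid)

/-- Weak maximum principle on a slab where `u ≥ 0`. -/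
lemma ramp_weakMP (T : ℝ) (u k : ℝ → ℝ → ℝ)
    (hu : ContDiff ℝ ∞ (fun p : ℝ × ℝ => u p.1 p.2))
    (hper : ∀ t, Function.Periodic (fun s => u s t) (2 * π))
    (hpde : ∀ s : ℝ, ∀ t ∈ Set.Ico (0:ℝ) T,
      deriv (fun t' => u s t') t =
        deriv (deriv (fun s' => u s' t)) s + (k s t) ^ 2 * u s t)
    {a c : ℝ} (ha : 0 ≤ a) (hac : a ≤ c) (hcT : c < T)
    (hnn : ∀ t ∈ Set.Icc a c, ∀ s, 0 ≤ u s t) :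
    ∀ t ∈ Set.Icc a c, ∀ s, sInf (Set.range fun s' => u s' a) ≤ u s t := by
  have hucont : Continuous (fun p : ℝ × ℝ => u p.1 p.2) := hu.continuous
  have hconts : ∀ t, Continuous (fun s => u s t) := fun t =>
    hucont.comp (continuous_id.prodMk continuous_const)
  have hcontt : ∀ s, Continuous (fun t => u s t) := fun s =>
    hucont.comp (continuous_const.prodMk continuous_id)
  have h2π : (0:ℝ) < 2 * π := by positivity
  have hrange : ∀ t, Set.range (fun s => u s t) = (fun s => u s t) '' Set.Icc 0 (2*π) := by
    intro t
    have := (hper t).image_Icc h2π 0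
    rw [zero_add] at this
    exact this.symm
  set m := sInf (Set.range fun s' => u s' a) with hm_def
  have hbdd : ∀ t, BddBelow (Set.range fun s => u s t) := by
    intro t
    rw [hrange t]
    exact (isCompact_Icc.image (hconts t)).bddBelow
  have hma : ∀ s, m ≤ u s a := fun s => csInf_le (hbdd a) (Set.mem_range_self s)
  -- ε-version
  have key : ∀ ε : ℝ, 0 < ε → ∀ t ∈ Set.Icc a c, ∀ s, m - ε * (c - a) ≤ u s t := by
    intro ε hε t ht s
    set w : ℝ × ℝ → ℝ := fun p => u p.1 p.2 + ε * p.2 with hw_def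
    have hwcont : Continuous w := hucont.add (continuous_const.mul continuous_snd)
    set K : Set (ℝ × ℝ) := Set.Icc 0 (2*π) ×ˢ Set.Icc a c with hK_def
    have hKc : IsCompact K := isCompact_Icc.prod isCompact_Icc
    have hKne : K.Nonempty := ⟨(0, a), ⟨⟨le_refl _, h2π.le⟩, ⟨le_refl _, hac⟩⟩⟩
    obtain ⟨p₁, hp₁K, hp₁min⟩ := hKc.exists_isMinOn hKne hwcont.continuousOn
    obtain ⟨s₁, t₁⟩ := p₁
    have hs₁ : s₁ ∈ Set.Icc (0:ℝ) (2*π) := hp₁K.1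
    have ht₁ : t₁ ∈ Set.Icc a c := hp₁K.2
    -- the min of w on K is at least m + ε * a
    have hminval : m + ε * a ≤ w (s₁, t₁) := by
      by_contra hlt
      push_neg at hlt
      have ht₁a : a < t₁ := by
        rcases lt_or_eq_of_le ht₁.1 with h | h
        · exact h
        · exfalso
          have : m + ε * a ≤ w (s₁, t₁) := by
            have := hma s₁
            simp only [hw_def, ← h]
            linarith
          linarith
      -- global min in s at (·, t₁)
      have hsmin : ∀ s', u s₁ t₁ ≤ u s' t₁ := by
        intro s'
        have hmem : u s' t₁ ∈ (fun s => u s t₁) '' Set.Icc 0 (2*π) := by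
          rw [← hrange t₁]; exact Set.mem_range_self s'
        obtain ⟨s'', hs'', heq⟩ := hmem
        have h5 : u s₁ t₁ + ε * t₁ ≤ u s'' t₁ + ε * t₁ := hp₁min (Set.mk_mem_prod hs'' ht₁)
        have h6 : u s'' t₁ = u s' t₁ := heq
        rw [← h6]
        linarith
      -- second derivative in s
      have hg : ContDiff ℝ ∞ (fun s' => u s' t₁) :=
        hu.comp (contDiff_id.prodMk contDiff_const)
      have hss : 0 ≤ deriv (deriv (fun s' => u s' t₁)) s₁ :=
        ramp_second_deriv_nonneg _ hg s₁ hsmin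
      -- time derivative
      have hφd : Differentiable ℝ (fun t' => u s₁ t') :=
        (hu.comp (contDiff_const.prodMk contDiff_id)).differentiable (by simp)
      have hφε : HasDerivAt (fun t' => u s₁ t' + ε * t')
          (deriv (fun t' => u s₁ t') t₁ + ε) t₁ := by
        have h1 := (hφd t₁).hasDerivAt
        have h2 : HasDerivAt (fun t' : ℝ => ε * t') ε t₁ := by
          simpa using (hasDerivAt_id t₁).const_mul ε
        exact h1.add h2
      have htmin : ∀ t' ∈ Set.Icc a t₁, (fun t' => u s₁ t' + ε * t') t₁ ≤
          (fun t' => u s₁ t' + ε * t') t' := by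
        intro t' ht'
        exact hp₁min (Set.mk_mem_prod hs₁ ⟨ht'.1, ht'.2.trans ht₁.2⟩)
      have hder : deriv (fun t' => u s₁ t' + ε * t') t₁ ≤ 0 :=
        ramp_deriv_nonpos _ hφε.differentiableAt ht₁a htmin
      rw [hφε.deriv] at hder
      -- PDE
      have ht₁Ico : t₁ ∈ Set.Ico (0:ℝ) T := ⟨le_trans ha ht₁.1, lt_of_le_of_lt ht₁.2 hcT⟩
      have hpde₁ := hpde s₁ t₁ ht₁Ico
      have hku : 0 ≤ (k s₁ t₁) ^ 2 * u s₁ t₁ :=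
        mul_nonneg (sq_nonneg _) (hnn t₁ ⟨ht₁.1, ht₁.2⟩ s₁)
      linarith
    -- conclude
    have hst : ∀ s' ∈ Set.Icc (0:ℝ) (2*π), m + ε * a ≤ u s' t + ε * t := by
      intro s' hs'
      have h5 : u s₁ t₁ + ε * t₁ ≤ u s' t + ε * t := hp₁min (Set.mk_mem_prod hs' ht)
      have h6 : m + ε * a ≤ u s₁ t₁ + ε * t₁ := hminval
      linarith
    obtain ⟨s'', hs'', heq⟩ : ∃ s'' ∈ Set.Icc (0:ℝ) (2*π), u s'' t = u s t := by
      have hmem : u s t ∈ (fun s => u s t) '' Set.Icc 0 (2*π) := by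
        rw [← hrange t]; exact Set.mem_range_self s
      obtain ⟨s'', h1, h2⟩ := hmem
      exact ⟨s'', h1, h2⟩
    have := hst s'' hs''
    rw [heq] at this
    have hta : a ≤ t := ht.1
    have htc : t ≤ c := ht.2
    nlinarith
  -- let ε → 0
  intro t ht s
  by_contra hlt
  push_neg at hlt
  set d := m - u s t with hd_def
  have hd : 0 < d := by linarith
  have hεpos : 0 < d / (2 * (c - a) + 2) := by
    have : (0:ℝ) < 2 * (c - a) + 2 := by linarith
    positivity
  have := key _ hεpos t ht s
  have h1 : (0:ℝ) < 2 * (c - a) + 2 := by linarith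
  have h2 : d / (2 * (c - a) + 2) * (c - a) < d := by
    rw [div_mul_eq_mul_div, div_lt_iff₀ h1]
    nlinarith
  linarith

/-- The infimum at a positive time slice is positive. -/
lemma ramp_sInf_pos (u : ℝ → ℝ → ℝ)
    (hucont : Continuous (fun p : ℝ × ℝ => u p.1 p.2))
    (hper : ∀ t, Function.Periodic (fun s => u s t) (2 * π))
    {a : ℝ} (hpos : ∀ s, 0 < u s a) :
    0 < sInf (Set.range fun s' => u s' a) := by
  have hconts : Continuous (fun s => u s a) :=
    hucont.comp (continuous_id.prodMk continuous_const)
  have h2π : (0:ℝ) < 2 * π := by positivity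
  have hrange : Set.range (fun s => u s a) = (fun s => u s a) '' Set.Icc 0 (2*π) := by
    have := (hper a).image_Icc h2π 0
    rw [zero_add] at this
    exact this.symm
  obtain ⟨s₀, hs₀, hmin⟩ := isCompact_Icc.exists_isMinOn ⟨0, ⟨le_refl _, h2π.le⟩⟩
    hconts.continuousOn
  have hleast : IsLeast ((fun s => u s a) '' Set.Icc 0 (2*π)) (u s₀ a) := by
    constructor
    · exact Set.mem_image_of_mem _ hs₀
    · rintro x ⟨s, hs, rfl⟩
      exact hmin hs
  rw [hrange, hleast.csInf_eq]
  exact hpos s₀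

/-- Bootstrap: positivity at time `a` propagates to `[a,b]` with bound `m(a)`. -/
lemma ramp_boot (T : ℝ) (u k : ℝ → ℝ → ℝ)
    (hu : ContDiff ℝ ∞ (fun p : ℝ × ℝ => u p.1 p.2))
    (hper : ∀ t, Function.Periodic (fun s => u s t) (2 * π))
    (hpde : ∀ s : ℝ, ∀ t ∈ Set.Ico (0:ℝ) T,
      deriv (fun t' => u s t') t =
        deriv (deriv (fun s' => u s' t)) s + (k s t) ^ 2 * u s t)
    {a b : ℝ} (ha : 0 ≤ a) (hab : a ≤ b) (hbT : b < T)
    (hpos : ∀ s, 0 < u s a) :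
    ∀ t ∈ Set.Icc a b, ∀ s, sInf (Set.range fun s' => u s' a) ≤ u s t := by
  have hucont : Continuous (fun p : ℝ × ℝ => u p.1 p.2) := hu.continuous
  have hconts : ∀ t, Continuous (fun s => u s t) := fun t =>
    hucont.comp (continuous_id.prodMk continuous_const)
  have hcontt : ∀ s, Continuous (fun t => u s t) := fun s =>
    hucont.comp (continuous_const.prodMk continuous_id)
  have h2π : (0:ℝ) < 2 * π := by positivity
  have hrange : ∀ t, Set.range (fun s => u s t) = (fun s => u s t) '' Set.Icc 0 (2*π) := by
    intro t
    have := (hper t).image_Icc h2π 0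
    rw [zero_add] at this
    exact this.symm
  set m := sInf (Set.range fun s' => u s' a) with hm_def
  have hbdd : ∀ t, BddBelow (Set.range fun s => u s t) := by
    intro t
    rw [hrange t]
    exact (isCompact_Icc.image (hconts t)).bddBelow
  have hma : ∀ s, m ≤ u s a := fun s => csInf_le (hbdd a) (Set.mem_range_self s)
  have hm_pos : 0 < m := ramp_sInf_pos u hucont hper hpos
  have hred : ∀ t (c : ℝ), (∀ s' ∈ Set.Icc (0:ℝ) (2*π), c ≤ u s' t) → ∀ s, c ≤ u s t := by
    intro t c H s
    have hmem : u s t ∈ (fun s => u s t) '' Set.Icc 0 (2*π) := by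
      rw [← hrange t]; exact Set.mem_range_self s
    obtain ⟨s', hs', heq⟩ := hmem
    rw [← heq]
    exact H s' hs'
  set A : Set ℝ := {t | t ∈ Set.Icc a b ∧ ∀ τ ∈ Set.Icc a t, ∀ s, m/2 ≤ u s τ} with hA_def
  have haA : a ∈ A := by
    refine ⟨⟨le_refl a, hab⟩, ?_⟩
    intro τ hτ s
    have hτa : τ = a := le_antisymm hτ.2 hτ.1
    rw [hτa]
    linarith [hma s]
  have hAbdd : BddAbove A := ⟨b, fun t ht => ht.1.2⟩
  have hAne : A.Nonempty := ⟨a, haA⟩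
  set tstar := sSup A with htstar_def
  have hat : a ≤ tstar := le_csSup hAbdd haA
  have htb : tstar ≤ b := csSup_le hAne fun t ht => ht.1.2
  have hbelow : ∀ τ ∈ Set.Ico a tstar, ∀ s, m/2 ≤ u s τ := by
    intro τ hτ s
    obtain ⟨t', ht'A, hτt'⟩ := exists_lt_of_lt_csSup hAne hτ.2
    exact ht'A.2 τ ⟨hτ.1, hτt'.le⟩ s
  have hstarA : tstar ∈ A := by
    refine ⟨⟨hat, htb⟩, ?_⟩
    intro τ hτ s
    rcases lt_or_eq_of_le hτ.2 with h | h
    · exact hbelow τ ⟨hτ.1, h⟩ s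
    · rw [h]
      rcases lt_or_eq_of_le hat with h2 | h2
      · exact ramp_le_of_Ico (fun τ' => u s τ') (hcontt s) h2 fun τ' hτ' => hbelow τ' hτ' s
      · rw [← h2]
        linarith [hma s]
  have hMPstar : ∀ t ∈ Set.Icc a tstar, ∀ s, m ≤ u s t :=
    ramp_weakMP T u k hu hper hpde ha hat (lt_of_le_of_lt htb hbT)
      (fun t ht s => le_trans (by linarith) (hstarA.2 t ht s))
  have hteq : tstar = b := by
    by_contra hne
    have hlt : tstar < b := lt_of_le_of_ne htb hne
    set K' : Set (ℝ × ℝ) := Set.Icc (0:ℝ) (2*π) ×ˢ Set.Icc tstar b with hK'_def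
    have hK'c : IsCompact K' := isCompact_Icc.prod isCompact_Icc
    set C : Set (ℝ × ℝ) := K' ∩ (fun p : ℝ × ℝ => u p.1 p.2) ⁻¹' Set.Iic (m/2) with hC_def
    have hCc : IsCompact C := hK'c.inter_right (isClosed_Iic.preimage hucont)
    by_cases hCne : C.Nonempty
    · obtain ⟨p₂, hp₂C, hp₂min⟩ := hCc.exists_isMinOn hCne continuous_snd.continuousOn
      have ht₂mem : p₂.2 ∈ Set.Icc tstar b := hp₂C.1.2
      have ht₂gt : tstar < p₂.2 := by
        rcases lt_or_eq_of_le ht₂mem.1 with h | h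
        · exact h
        · exfalso
          have h1 : m ≤ u p₂.1 tstar := hMPstar tstar ⟨hat, le_refl _⟩ p₂.1
          rw [h] at h1
          have h2 : u p₂.1 p₂.2 ≤ m/2 := hp₂C.2
          linarith
      have hstrict : ∀ τ, tstar < τ → τ < p₂.2 → ∀ s' ∈ Set.Icc (0:ℝ) (2*π),
          m/2 < u s' τ := by
        intro τ h1 h2 s' hs'
        by_contra hle
        push_neg at hle
        have hmemC : (s', τ) ∈ C := ⟨⟨hs', ⟨h1.le, h2.le.trans ht₂mem.2⟩⟩, hle⟩
        have h3 : p₂.2 ≤ τ := hp₂min hmemC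
        linarith
      have ht₂A : p₂.2 ∈ A := by
        refine ⟨⟨hat.trans ht₂mem.1, ht₂mem.2⟩, ?_⟩
        intro τ hτ s
        refine hred τ (m/2) ?_ s
        intro s' hs'
        rcases le_or_gt τ tstar with h | h
        · exact hstarA.2 τ ⟨hτ.1, h⟩ s'
        · rcases lt_or_eq_of_le hτ.2 with h2 | h2
          · exact (hstrict τ h h2 s' hs').le
          · refine ramp_le_of_Ico (fun τ' => u s' τ') (hcontt s') h ?_
            intro τ' hτ'
            rcases lt_or_eq_of_le hτ'.1 with h3 | h3
            · have h4 : τ' < p₂.2 := lt_of_lt_of_le hτ'.2 h2.le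
              exact (hstrict τ' h3 h4 s' hs').le
            · rw [← h3]
              have := hMPstar tstar ⟨hat, le_refl _⟩ s'
              linarith
      have h5 := le_csSup hAbdd ht₂A
      linarith
    · have hCemp : ∀ p ∈ K', m/2 < u p.1 p.2 := by
        intro p hp
        by_contra hle
        push_neg at hle
        exact hCne ⟨p, hp, hle⟩
      have hbA : b ∈ A := by
        refine ⟨⟨hab, le_refl b⟩, ?_⟩
        intro τ hτ s
        refine hred τ (m/2) ?_ s
        intro s' hs'
        rcases le_or_gt τ tstar with h | h
        · exact hstarA.2 τ ⟨hτ.1, h⟩ s'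
        · exact (hCemp (s', τ) ⟨hs', ⟨h.le, hτ.2⟩⟩).le
      have h5 := le_csSup hAbdd hbA
      linarith
  have hnnb : ∀ t ∈ Set.Icc a b, ∀ s, 0 ≤ u s t := by
    intro t ht s
    have := hstarA.2 t ⟨ht.1, by rw [hteq]; exact ht.2⟩ s
    linarith
  exact ramp_weakMP T u k hu hper hpde ha hab hbT hnnb

theorem ramp_preserved (T : ℝ) (u k : ℝ → ℝ → ℝ)
    (hu : ContDiff ℝ (⊤ : ℕ∞) (fun p : ℝ × ℝ => u p.1 p.2))
    (hk : Continuous (fun p : ℝ × ℝ => k p.1 p.2))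
    (hper : ∀ t, Function.Periodic (fun s => u s t) (2 * π))
    (hpde : ∀ s : ℝ, ∀ t ∈ Set.Ico (0:ℝ) T,
      deriv (fun t' => u s t') t =
        deriv (deriv (fun s' => u s' t)) s + (k s t) ^ 2 * u s t)
    (hinit : ∀ s, 0 < u s 0) :
    (∀ t ∈ Set.Ico (0:ℝ) T, ∀ s, 0 < u s t) ∧
    MonotoneOn (fun t => sInf (Set.range fun s => u s t)) (Set.Ico (0:ℝ) T) := by
  have hu' : ContDiff ℝ ∞ (fun p : ℝ × ℝ => u p.1 p.2) := hu.of_le (by simp)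
  have hm0pos : 0 < sInf (Set.range fun s' => u s' 0) :=
    ramp_sInf_pos u hu'.continuous hper hinit
  have hpos : ∀ t ∈ Set.Ico (0:ℝ) T, ∀ s, 0 < u s t := by
    intro t ht s
    have h1 := ramp_boot T u k hu' hper hpde (le_refl 0) ht.1 ht.2 hinit t
      ⟨ht.1, le_refl t⟩ s
    exact lt_of_lt_of_le hm0pos h1
  refine ⟨hpos, ?_⟩
  intro a ha b hb hab
  refine le_csInf (Set.range_nonempty _) ?_
  rintro x ⟨s, rfl⟩
  exact ramp_boot T u k hu' hper hpde ha.1 hab hb.2 (hpos a ha) b ⟨hab, le_refl b⟩ s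
end
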